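/- Let y₁, y₂ be real solutions of y'' = 6y² − x with the same minimum value y_l: y₁(x₁) = y₂(x₂) = y_l, y'₁(x₁) = y'₂(x₂) = 0, with x₁ < x₂ ≤ 0. Let a₁, a₂ be the left endpoints of their intervals of existence. Then a₂ > a₁, and for all x ∈ (a₂, x₁): y₁(x) < y₂(x) and y'₂(x) < y'₁(x) < 0. -/

import Mathlib

open Filter Set Topology

/-!
Write `w = y₂ - y₁`. Along a solution the energy `(y')² - 4y³` has derivative `-2xy'`, so for
`x ≤ 0` it grows to the left of the minimum. At `x₁` we have `w > 0`, `w' < 0` and `y₂` has the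
larger energy; the energy difference keeps growing to the left as long as `w' < 0`, while at a
first point where `w'` vanishes, `w > 0` and equal slopes would give `y₂` the smaller energy.
Hence `y₁ < y₂` and `y₂' < y₁'` on the common interval, which already excludes `a₂ < a₁`, as
`y₁` blows up at `a₁` while `y₂` stays finite there.

A common pole `a` is excluded by asymptotics. Comparing the energy with `4y³` and separating
variables in `1/√y` gives `y ≍ (x - a)⁻²`, so `w'' = 6(y₁ + y₂)w ≥ (35/4) w / (x - a)²`.
A positive decreasing supersolution of this Euler equation dominates a multiple of
`(x - a)^(-5/2)`, incompatible with `w ≤ y₂ ≤ 4 (x - a)⁻²`.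
-/

section Calculus

variable {f f' : ℝ → ℝ} {D : Set ℝ} {a b k : ℝ}

lemma strictMonoOn_of_hasDerivAt_pos (hD : Convex ℝ D) (hf : ∀ x ∈ D, HasDerivAt f (f' x) x)
    (hf' : ∀ x ∈ interior D, 0 < f' x) : StrictMonoOn f D :=
  strictMonoOn_of_hasDerivWithinAt_pos hD (HasDerivAt.continuousOn hf)
    (fun x hx => (hf x (interior_subset hx)).hasDerivWithinAt) hf'

lemma strictAntiOn_of_hasDerivAt_neg (hD : Convex ℝ D) (hf : ∀ x ∈ D, HasDerivAt f (f' x) x)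
    (hf' : ∀ x ∈ interior D, f' x < 0) : StrictAntiOn f D :=
  strictAntiOn_of_hasDerivWithinAt_neg hD (HasDerivAt.continuousOn hf)
    (fun x hx => (hf x (interior_subset hx)).hasDerivWithinAt) hf'

lemma monotoneOn_of_hasDerivAt_nonneg (hD : Convex ℝ D) (hf : ∀ x ∈ D, HasDerivAt f (f' x) x)
    (hf' : ∀ x ∈ interior D, 0 ≤ f' x) : MonotoneOn f D :=
  monotoneOn_of_hasDerivWithinAt_nonneg hD (HasDerivAt.continuousOn hf)
    (fun x hx => (hf x (interior_subset hx)).hasDerivWithinAt) hf'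

lemma antitoneOn_of_hasDerivAt_nonpos (hD : Convex ℝ D) (hf : ∀ x ∈ D, HasDerivAt f (f' x) x)
    (hf' : ∀ x ∈ interior D, f' x ≤ 0) : AntitoneOn f D :=
  antitoneOn_of_hasDerivWithinAt_nonpos hD (HasDerivAt.continuousOn hf)
    (fun x hx => (hf x (interior_subset hx)).hasDerivWithinAt) hf'

lemma le_mul_sub_of_hasDerivAt_le (hf : ∀ x ∈ Ioc a b, HasDerivAt f (f' x) x)
    (hf' : ∀ x ∈ Ioc a b, f' x ≤ k) (hlim : Tendsto f (𝓝[>] a) (𝓝 0)) :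
    ∀ x ∈ Ioc a b, f x ≤ k * (x - a) := by
  intro x hx
  have hanti : AntitoneOn (fun t => f t - k * t) (Ioc a b) :=
    antitoneOn_of_hasDerivAt_nonpos (convex_Ioc a b)
      (fun t ht => (hf t ht).sub ((hasDerivAt_id t).const_mul k))
      (fun t ht => by simpa using hf' t (Ioo_subset_Ioc_self (by simpa using ht)))
  have hlim' : Tendsto (fun t => f t - k * t + k * x) (𝓝[>] a) (𝓝 (0 - k * a + k * x)) :=
    (hlim.sub (tendsto_nhdsWithin_of_tendsto_nhds
      ((continuous_const_mul k).tendsto a))).add_const _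
  have hle : f x ≤ 0 - k * a + k * x := ge_of_tendsto hlim' <| by
    filter_upwards [Ioo_mem_nhdsGT hx.1] with t ht
    linarith [hanti ⟨ht.1, ht.2.le.trans hx.2⟩ hx ht.2.le]
  linarith

lemma mul_sub_le_of_le_hasDerivAt (hf : ∀ x ∈ Ioc a b, HasDerivAt f (f' x) x)
    (hf' : ∀ x ∈ Ioc a b, k ≤ f' x) (hlim : Tendsto f (𝓝[>] a) (𝓝 0)) :
    ∀ x ∈ Ioc a b, k * (x - a) ≤ f x := by
  intro x hx
  have := le_mul_sub_of_hasDerivAt_le (f := fun t => -f t) (f' := fun t => -f' t) (k := -k)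
    (fun t ht => (hf t ht).neg) (fun t ht => neg_le_neg (hf' t ht)) (by simpa using hlim.neg) x hx
  linarith

lemma forall_neg_of_ne_zero (hf : ContinuousOn f (Ioc a b)) (hb : f b < 0)
    (h : ∀ c ∈ Ioo a b, (∀ x ∈ Ioc c b, f x < 0) → f c ≠ 0) : ∀ x ∈ Ioc a b, f x < 0 := by
  intro x hx
  by_contra! hfx
  set S := {t ∈ Icc x b | 0 ≤ f t}
  have hSc : IsClosed S :=
    (hf.mono (Icc_subset_Ioc hx.1 le_rfl)).preimage_isClosed_of_isClosed isClosed_Icc isClosed_Ici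
  have hxS : x ∈ S := ⟨left_mem_Icc.2 hx.2, hfx⟩
  have hbdd : BddAbove S := ⟨b, fun t ht => ht.1.2⟩
  set c := sSup S
  have hcS : c ∈ S := hSc.csSup_mem ⟨x, hxS⟩ hbdd
  have hxc : x ≤ c := le_csSup hbdd hxS
  have hcb : c < b := lt_of_le_of_ne hcS.1.2 fun hcb => (hcS.2.trans_lt (hcb ▸ hb)).false
  have hneg : ∀ t ∈ Ioc c b, f t < 0 := fun t ht => by
    by_contra! hft
    exact (le_csSup hbdd ⟨⟨hxc.trans ht.1.le, ht.2⟩, hft⟩).not_gt ht.1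
  have hac : a < c := hx.1.trans_le hxc
  have hle : f c ≤ 0 := by
    refine le_of_tendsto ((hf.continuousAt (Ioc_mem_nhds hac hcb)).tendsto.mono_left
      (nhdsWithin_le_nhds (s := Ioi c))) ?_
    filter_upwards [Ioc_mem_nhdsGT hcb] with t ht using (hneg t ht).le
  exact h c ⟨hac, hcb⟩ hneg (le_antisymm hle hcS.2)

lemma sqrt_pow_three_sq {u : ℝ} (hu : 0 ≤ u) : (√u ^ 3) ^ 2 = u ^ 3 := by
  rw [← pow_mul, mul_comm, pow_mul, Real.sq_sqrt hu]

lemma HasDerivAt.inv_sqrt {x y₀ : ℝ} (hy : HasDerivAt f y₀ x) (hpos : 0 < f x) :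
    HasDerivAt (fun t => (√(f t))⁻¹) (-y₀ / (2 * √(f x) ^ 3)) x := by
  have hs := Real.sqrt_pos.2 hpos
  refine ((hy.sqrt hpos.ne').inv hs.ne').congr_deriv ?_
  field_simp

lemma one_le_sq_mul_of_sq_deriv_le (hk : 0 ≤ k) (hf : ∀ x ∈ Ioc a b, HasDerivAt f (f' x) x)
    (hpos : ∀ x ∈ Ioc a b, 0 < f x) (hblow : Tendsto f (𝓝[>] a) atTop)
    (hE : ∀ x ∈ Ioc a b, f' x ^ 2 ≤ 4 * k ^ 2 * f x ^ 3) :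
    ∀ x ∈ Ioc a b, 1 ≤ k ^ 2 * (x - a) ^ 2 * f x := by
  have hg := le_mul_sub_of_hasDerivAt_le (k := k) (fun x hx => (hf x hx).inv_sqrt (hpos x hx))
    (fun x hx => ?_) (Real.tendsto_sqrt_atTop.comp hblow).inv_tendsto_atTop
  · intro x hx
    have hs := Real.sqrt_pos.2 (hpos x hx)
    have h1 : 1 ≤ k * (x - a) * √(f x) := by
      have := hg x hx
      rwa [inv_le_iff_one_le_mul₀ hs] at this
    calc 1 ≤ (k * (x - a) * √(f x)) ^ 2 := one_le_pow₀ h1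
      _ = k ^ 2 * (x - a) ^ 2 * f x := by rw [mul_pow, Real.sq_sqrt (hpos x hx).le]; ring
  · have hs := Real.sqrt_pos.2 (hpos x hx)
    have h3 : -f' x ≤ 2 * k * √(f x) ^ 3 := by
      refine (neg_le_abs _).trans (abs_le_of_sq_le_sq ?_ (by positivity))
      rw [mul_pow, sqrt_pow_three_sq (hpos x hx).le]
      linarith [hE x hx]
    rw [div_le_iff₀ (by positivity)]
    linarith

lemma sq_mul_le_one_of_le_sq_deriv (hk : 0 ≤ k) (hf : ∀ x ∈ Ioc a b, HasDerivAt f (f' x) x)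
    (hpos : ∀ x ∈ Ioc a b, 0 < f x) (hblow : Tendsto f (𝓝[>] a) atTop)
    (hneg : ∀ x ∈ Ioc a b, f' x ≤ 0)
    (hE : ∀ x ∈ Ioc a b, 4 * k ^ 2 * f x ^ 3 ≤ f' x ^ 2) :
    ∀ x ∈ Ioc a b, k ^ 2 * (x - a) ^ 2 * f x ≤ 1 := by
  have hg := mul_sub_le_of_le_hasDerivAt (k := k) (fun x hx => (hf x hx).inv_sqrt (hpos x hx))
    (fun x hx => ?_) (Real.tendsto_sqrt_atTop.comp hblow).inv_tendsto_atTop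
  · intro x hx
    have hs := Real.sqrt_pos.2 (hpos x hx)
    have h1 : k * (x - a) * √(f x) ≤ 1 := by
      have := hg x hx
      rwa [← one_div, le_div_iff₀ hs] at this
    have h0 : 0 ≤ k * (x - a) * √(f x) := by have := sub_pos.2 hx.1; positivity
    calc k ^ 2 * (x - a) ^ 2 * f x = (k * (x - a) * √(f x)) ^ 2 := by
          rw [mul_pow, Real.sq_sqrt (hpos x hx).le]; ring
      _ ≤ 1 := pow_le_one₀ h0 h1
  · have hs := Real.sqrt_pos.2 (hpos x hx)
    have h3 : 2 * k * √(f x) ^ 3 ≤ -f' x := by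
      refine (sq_le_sq₀ (by positivity) (neg_nonneg.2 (hneg x hx))).1 ?_
      rw [neg_sq, mul_pow, sqrt_pow_three_sq (hpos x hx).le]
      linarith [hE x hx]
    rw [le_div_iff₀ (by positivity)]
    linarith

lemma right_le_of_convex_where_nonneg {z z' z'' : ℝ → ℝ}
    (hz : ∀ x ∈ Ioc a b, HasDerivAt z (z' x) x) (hz' : ∀ x ∈ Ioc a b, HasDerivAt z' (z'' x) x)
    (hconvex : ∀ x ∈ Ioc a b, 0 ≤ z x → 0 ≤ z'' x) (hzb : 0 ≤ z b) (hz'b : z' b < 0) :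
    ∀ x ∈ Ioc a b, z b ≤ z x := by
  have hz'neg : ∀ x ∈ Ioc a b, z' x < 0 := by
    refine forall_neg_of_ne_zero (HasDerivAt.continuousOn hz') hz'b fun c hc hneg => ?_
    have hsub : Icc c b ⊆ Ioc a b := Icc_subset_Ioc hc.1 le_rfl
    have hzanti : AntitoneOn z (Icc c b) :=
      antitoneOn_of_hasDerivAt_nonpos (convex_Icc c b) (fun x hx => hz x (hsub hx))
        fun x hx => by rw [interior_Icc] at hx; exact (hneg x ⟨hx.1, hx.2.le⟩).le
    have hz'mono : MonotoneOn z' (Icc c b) :=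
      monotoneOn_of_hasDerivAt_nonneg (convex_Icc c b) (fun x hx => hz' x (hsub hx))
        fun x hx => hconvex x (hsub (interior_subset hx)) <|
          hzb.trans (hzanti (interior_subset hx) (right_mem_Icc.2 hc.2.le) (interior_subset hx).2)
    exact ((hz'mono (left_mem_Icc.2 hc.2.le) (right_mem_Icc.2 hc.2.le) hc.2.le).trans_lt hz'b).ne
  intro x hx
  exact antitoneOn_of_hasDerivAt_nonpos (convex_Ioc a b) hz
    (fun x hx => (hz'neg x (interior_subset hx)).le) hx (right_mem_Ioc.2 (hx.1.trans_le hx.2)) hx.2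

lemma hasDerivAt_sub_rpow (a q : ℝ) {x : ℝ} (hx : a < x) :
    HasDerivAt (fun t => (t - a) ^ q) (q * (x - a) ^ (q - 1)) x := by
  simpa using ((hasDerivAt_id x).sub_const a).rpow_const (p := q) (Or.inl (sub_pos.2 hx).ne')

lemma exists_le_rpow_mul_of_supersolution {w w' W : ℝ → ℝ} {p : ℝ} (hp : 0 ≤ p)
    (hw : ∀ x ∈ Ioc a b, HasDerivAt w (w' x) x)
    (hw' : ∀ x ∈ Ioc a b, HasDerivAt w' (W x) x)
    (hW : ∀ x ∈ Ioc a b, p * (p + 1) * w x ≤ (x - a) ^ 2 * W x)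
    (hwb : 0 < w b) (hw'b : w' b < 0) :
    ∃ α > 0, ∀ x ∈ Ioc a b, α ≤ (x - a) ^ p * w x := by
  obtain ⟨α, ⟨hαw, hαw'⟩, hα⟩ : ∃ α, (α * (b - a) ^ (-p) < w b ∧
      w' b - α * (-p * (b - a) ^ (-p - 1)) < 0) ∧ 0 < α := by
    refine (Eventually.and ?_ (self_mem_nhdsWithin (a := (0 : ℝ)) (s := Ioi 0))).exists
    refine Eventually.filter_mono nhdsWithin_le_nhds (Eventually.and ?_ ?_)
    · exact ((continuous_id.mul continuous_const).tendsto' 0 0 (zero_mul _)).eventually_lt_const hwb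
    · exact (((continuous_const.sub (continuous_id.mul continuous_const)).tendsto' 0 (w' b))
        (by simp)).eventually_lt_const hw'b
  -- `(x - a)^(-p)` solves `v'' = p(p+1) v / (x - a)²`, so `w - α (x - a)^(-p)` is convex
  -- wherever it is nonnegative.
  have hz_le := right_le_of_convex_where_nonneg
    (z := fun x => w x - α * (x - a) ^ (-p))
    (fun x hx => (hw x hx).sub ((hasDerivAt_sub_rpow a (-p) hx.1).const_mul α))
    (fun x hx => (hw' x hx).sub
      (((hasDerivAt_sub_rpow a (-p - 1) hx.1).const_mul (-p)).const_mul α))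
    (fun x hx hzx => by
      have ht : 0 < x - a := sub_pos.2 hx.1
      have hpow : (x - a) ^ 2 * (x - a) ^ (-p - 1 - 1) = (x - a) ^ (-p) := by
        rw [← Real.rpow_natCast, ← Real.rpow_add ht]
        congr 1
        push_cast
        ring
      refine (mul_nonneg_iff_of_pos_left (pow_pos ht 2)).1 ?_
      have hpz : 0 ≤ p * (p + 1) * (w x - α * (x - a) ^ (-p)) := by positivity
      linear_combination hpz + hW x hx + α * p * (p + 1) * hpow)
    (by linarith) hαw'
  refine ⟨α, hα, fun x hx => ?_⟩
  have ht : 0 < x - a := sub_pos.2 hx.1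
  have hαx : α * (x - a) ^ (-p) ≤ w x := by linarith [hz_le x hx]
  calc α = (x - a) ^ p * (α * (x - a) ^ (-p)) := by
        rw [Real.rpow_neg ht.le]; field_simp
    _ ≤ (x - a) ^ p * w x := mul_le_mul_of_nonneg_left hαx (Real.rpow_nonneg ht.le p)

lemma eventually_le_mul_cube {ε : ℝ} (hε : 0 < ε) (c₀ c₁ : ℝ) :
    ∀ᶠ u in atTop, c₁ * u + c₀ ≤ ε * u ^ 3 := by
  filter_upwards [eventually_ge_atTop (max 1 ((|c₁| + |c₀|) / ε))] with u hu
  have h1 : 1 ≤ u := (le_max_left _ _).trans hu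
  have h2 : |c₁| + |c₀| ≤ ε * u := by
    rw [← div_le_iff₀' hε]; exact (le_max_right _ _).trans hu
  have h3 : c₁ * u ≤ |c₁| * u ^ 2 :=
    (mul_le_mul_of_nonneg_right (le_abs_self c₁) (by linarith)).trans
      (mul_le_mul_of_nonneg_left (by nlinarith) (abs_nonneg c₁))
  have h4 : c₀ ≤ |c₀| * u ^ 2 :=
    (le_abs_self c₀).trans (le_mul_of_one_le_right (abs_nonneg c₀) (by nlinarith))
  nlinarith [mul_le_mul_of_nonneg_right h2 (sq_nonneg u)]

end Calculus

namespace PainleveI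

def SolvesOn (y y' : ℝ → ℝ) (s : Set ℝ) : Prop :=
  ∀ x ∈ s, HasDerivAt y (y' x) x ∧ HasDerivAt y' (6 * y x ^ 2 - x) x

/-- The paper's energy `(y')² - 4y³`, tilted by `2cy` so that its derivative along a solution is
`2(c - x)y'`. -/
def energy (c : ℝ) (y y' : ℝ → ℝ) (x : ℝ) : ℝ :=
  y' x ^ 2 - 4 * y x ^ 3 + 2 * c * y x

variable {y y' : ℝ → ℝ} {s t : Set ℝ} {a b : ℝ}

lemma SolvesOn.mono (h : SolvesOn y y' s) (hts : t ⊆ s) : SolvesOn y y' t :=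
  fun x hx => h x (hts hx)

lemma SolvesOn.hasDerivAt_energy (h : SolvesOn y y' s) (c : ℝ) {x : ℝ} (hx : x ∈ s) :
    HasDerivAt (energy c y y') (2 * (c - x) * y' x) x := by
  obtain ⟨hy, hy'⟩ := h x hx
  refine (((hy'.fun_pow 2).sub ((hy.fun_pow 3).const_mul 4)).add
    (hy.const_mul (2 * c))).congr_deriv ?_
  push_cast
  ring

lemma SolvesOn.deriv_neg (h : SolvesOn y y' (Ioc a b)) (hb : b ≤ 0) (hcrit : y' b = 0) :
    ∀ x ∈ Ioo a b, y' x < 0 := by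
  have hmono : StrictMonoOn y' (Ioc a b) :=
    strictMonoOn_of_hasDerivAt_pos (convex_Ioc a b) (fun x hx => (h x hx).2) fun x hx => by
      rw [interior_Ioc] at hx
      nlinarith [sq_nonneg (y x), hx.2]
  intro x hx
  simpa [hcrit] using hmono (Ioo_subset_Ioc_self hx) (right_mem_Ioc.2 (hx.1.trans hx.2)) hx.2

lemma SolvesOn.strictAntiOn (h : SolvesOn y y' (Ioc a b)) (hb : b ≤ 0) (hcrit : y' b = 0) :
    StrictAntiOn y (Ioc a b) :=
  strictAntiOn_of_hasDerivAt_neg (convex_Ioc a b) (fun x hx => (h x hx).1) fun x hx => by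
    rw [interior_Ioc] at hx
    exact h.deriv_neg hb hcrit x hx

lemma SolvesOn.strictAntiOn_energy_zero (h : SolvesOn y y' (Ioc a b)) (hb : b ≤ 0)
    (hcrit : y' b = 0) : StrictAntiOn (energy 0 y y') (Ioc a b) :=
  strictAntiOn_of_hasDerivAt_neg (convex_Ioc a b) (fun x hx => h.hasDerivAt_energy 0 hx)
    fun x hx => by
      rw [interior_Ioc] at hx
      nlinarith [h.deriv_neg hb hcrit x hx, hx.2]

lemma SolvesOn.monotoneOn_energy (h : SolvesOn y y' (Ioc a b)) (hb : b ≤ 0) (hcrit : y' b = 0) :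
    MonotoneOn (energy a y y') (Ioc a b) :=
  monotoneOn_of_hasDerivAt_nonneg (convex_Ioc a b) (fun x hx => h.hasDerivAt_energy a hx)
    fun x hx => by
      rw [interior_Ioc] at hx
      nlinarith [h.deriv_neg hb hcrit x hx, hx.1]

lemma SolvesOn.eventually_sq_deriv_bounds (h : SolvesOn y y' (Ioc a b)) (hab : a < b)
    (hb : b ≤ 0) (hcrit : y' b = 0) (hblow : Tendsto y (𝓝[>] a) atTop) :
    ∀ᶠ x in 𝓝[>] a, y x ^ 3 ≤ y' x ^ 2 ∧ y' x ^ 2 ≤ 121 / 25 * y x ^ 3 := by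
  filter_upwards [Ioc_mem_nhdsGT hab,
    hblow.eventually (eventually_le_mul_cube (by norm_num : (0 : ℝ) < 3) (4 * y b ^ 3) 0),
    hblow.eventually (eventually_le_mul_cube (by norm_num : (0 : ℝ) < 21 / 25)
      (2 * a * y b - 4 * y b ^ 3) (-2 * a))] with x hx hlarge₁ hlarge₂
  have hlow := (h.strictAntiOn_energy_zero hb hcrit).antitoneOn hx (right_mem_Ioc.2 hab) hx.2
  have hup := h.monotoneOn_energy hb hcrit hx (right_mem_Ioc.2 hab) hx.2
  simp only [energy, hcrit] at hlow hup
  constructor <;> nlinarith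

lemma SolvesOn.eventually_sq_mul_bounds (h : SolvesOn y y' (Ioc a b)) (hab : a < b)
    (hb : b ≤ 0) (hcrit : y' b = 0) (hblow : Tendsto y (𝓝[>] a) atTop) :
    ∀ᶠ x in 𝓝[>] a, 100 / 121 ≤ (x - a) ^ 2 * y x ∧ (x - a) ^ 2 * y x ≤ 4 := by
  obtain ⟨x₀, hx₀, hsub⟩ := mem_nhdsGT_iff_exists_Ioc_subset.1
    ((h.eventually_sq_deriv_bounds hab hb hcrit hblow).and
      ((hblow.eventually (eventually_gt_atTop 0)).and (Ioo_mem_nhdsGT hab)))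
  have hderiv : ∀ x ∈ Ioc a x₀, HasDerivAt y (y' x) x :=
    fun x hx => (h x (Ioo_subset_Ioc_self (hsub hx).2.2)).1
  have hpos : ∀ x ∈ Ioc a x₀, 0 < y x := fun x hx => (hsub hx).2.1
  have hlow := one_le_sq_mul_of_sq_deriv_le (k := 11 / 10) (by norm_num) hderiv hpos hblow
    fun x hx => by linarith [(hsub hx).1.2]
  have hup := sq_mul_le_one_of_le_sq_deriv (k := 1 / 2) (by norm_num) hderiv hpos hblow
    (fun x hx => (h.deriv_neg hb hcrit x (hsub hx).2.2).le) fun x hx => by linarith [(hsub hx).1.1]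
  filter_upwards [Ioc_mem_nhdsGT hx₀] with x hx
  constructor <;> linarith [hlow x hx, hup x hx]

lemma same_level_comparison {y₁ y₁' y₂ y₂' : ℝ → ℝ} {A x₁ x₂ : ℝ}
    (h₁ : SolvesOn y₁ y₁' (Ioc A x₁)) (h₂ : SolvesOn y₂ y₂' (Ioc A x₂))
    (hA : A < x₁) (hx : x₁ < x₂) (hx₂ : x₂ ≤ 0)
    (hlevel : y₁ x₁ = y₂ x₂) (hcrit₁ : y₁' x₁ = 0) (hcrit₂ : y₂' x₂ = 0) :
    ∀ x ∈ Ioc A x₁, y₁ x < y₂ x ∧ y₂' x < y₁' x := by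
  have hsub : Ioc A x₁ ⊆ Ioc A x₂ := Ioc_subset_Ioc_right hx.le
  have hx₁_mem : x₁ ∈ Ioc A x₂ := ⟨hA, hx.le⟩
  have hx₂_mem : x₂ ∈ Ioc A x₂ := right_mem_Ioc.2 (hA.trans hx)
  set w := fun x => y₂ x - y₁ x
  set m := fun x => energy 0 y₂ y₂' x - energy 0 y₁ y₁' x
  have hw : ∀ x ∈ Ioc A x₁, HasDerivAt w (y₂' x - y₁' x) x :=
    fun x hx => (h₂ x (hsub hx)).1.sub (h₁ x hx).1
  have hm : ∀ x ∈ Ioc A x₁, HasDerivAt m (2 * (0 - x) * (y₂' x - y₁' x)) x := fun x hx =>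
    ((h₂.hasDerivAt_energy 0 (hsub hx)).sub (h₁.hasDerivAt_energy 0 hx)).congr_deriv (by ring)
  have hw₁ : 0 < w x₁ := by
    have := h₂.strictAntiOn hx₂ hcrit₂ hx₁_mem hx₂_mem hx
    simp only [w]
    linarith
  have hm₁ : 0 < m x₁ := by
    have := h₂.strictAntiOn_energy_zero hx₂ hcrit₂ hx₁_mem hx₂_mem hx
    simp only [m, energy, hcrit₁, hcrit₂, hlevel] at this ⊢
    linarith
  have hw'_neg : ∀ x ∈ Ioc A x₁, y₂' x - y₁' x < 0 := by
    refine forall_neg_of_ne_zero (f := fun x => y₂' x - y₁' x)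
      (HasDerivAt.continuousOn fun x hx => (h₂ x (hsub hx)).2.sub (h₁ x hx).2)
      (by simpa [hcrit₁] using h₂.deriv_neg hx₂ hcrit₂ x₁ ⟨hA, hx⟩) fun c hc hneg heq => ?_
    have hsubc : Icc c x₁ ⊆ Ioc A x₁ := Icc_subset_Ioc hc.1 le_rfl
    have hwc : w x₁ ≤ w c :=
      antitoneOn_of_hasDerivAt_nonpos (convex_Icc c x₁) (fun x hx => hw x (hsubc hx))
        (fun x hx => by rw [interior_Icc] at hx; exact (hneg x ⟨hx.1, hx.2.le⟩).le)
        (left_mem_Icc.2 hc.2.le) (right_mem_Icc.2 hc.2.le) hc.2.le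
    have hmc : m x₁ ≤ m c :=
      antitoneOn_of_hasDerivAt_nonpos (convex_Icc c x₁) (fun x hx => hm x (hsubc hx))
        (fun x hx => by
          rw [interior_Icc] at hx
          nlinarith [hneg x ⟨hx.1, hx.2.le⟩, hx.2, hx, hx₂])
        (left_mem_Icc.2 hc.2.le) (right_mem_Icc.2 hc.2.le) hc.2.le
    have hcube : y₁ c ^ 3 < y₂ c ^ 3 :=
      Odd.strictMono_pow (by decide) (by simp only [w] at hwc; linarith)
    simp only [m, energy] at hmc hm₁
    have : y₂' c = y₁' c := by linarith
    rw [this] at hmc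
    linarith
  have hwanti : AntitoneOn w (Ioc A x₁) :=
    antitoneOn_of_hasDerivAt_nonpos (convex_Ioc A x₁) hw
      fun x hx => (hw'_neg x (interior_subset hx)).le
  refine fun x hx => ⟨?_, by linarith [hw'_neg x hx]⟩
  have := hwanti hx (right_mem_Ioc.2 hA) hx.2
  simp only [w] at this hw₁
  linarith

lemma not_eventually_lt_of_common_pole {y₁ y₁' y₂ y₂' : ℝ → ℝ} {a b₁ b₂ : ℝ}
    (h₁ : SolvesOn y₁ y₁' (Ioc a b₁)) (h₂ : SolvesOn y₂ y₂' (Ioc a b₂))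
    (hab₁ : a < b₁) (hab₂ : a < b₂) (hb₁ : b₁ ≤ 0) (hb₂ : b₂ ≤ 0)
    (hcrit₁ : y₁' b₁ = 0) (hcrit₂ : y₂' b₂ = 0)
    (hblow₁ : Tendsto y₁ (𝓝[>] a) atTop) (hblow₂ : Tendsto y₂ (𝓝[>] a) atTop) :
    ¬ ∀ᶠ x in 𝓝[>] a, y₁ x < y₂ x ∧ y₂' x < y₁' x := by
  intro hlt
  have hmem₁ : ∀ᶠ x in 𝓝[>] a, x ∈ Ioc a b₁ := Ioc_mem_nhdsGT hab₁
  have hmem₂ : ∀ᶠ x in 𝓝[>] a, x ∈ Ioc a b₂ := Ioc_mem_nhdsGT hab₂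
  obtain ⟨x₀, hx₀ : a < x₀, hsub⟩ := mem_nhdsGT_iff_exists_Ioc_subset.1
    (hlt.and ((h₁.eventually_sq_mul_bounds hab₁ hb₁ hcrit₁ hblow₁).and
      ((h₂.eventually_sq_mul_bounds hab₂ hb₂ hcrit₂ hblow₂).and (hmem₁.and hmem₂))))
  obtain ⟨α, hα, hαw⟩ := exists_le_rpow_mul_of_supersolution (p := 5 / 2) (by norm_num)
    (w := fun x => y₂ x - y₁ x) (w' := fun x => y₂' x - y₁' x)
    (fun x hx => (h₂ x (hsub hx).2.2.2.2).1.sub (h₁ x (hsub hx).2.2.2.1).1)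
    (fun x hx => (h₂ x (hsub hx).2.2.2.2).2.sub (h₁ x (hsub hx).2.2.2.1).2)
    (fun x hx => by
      -- `12 · 100/121 ≥ 35/4 = p(p+1)`
      obtain ⟨⟨hy, -⟩, ⟨hy₁, -⟩, -⟩ := hsub hx
      have ht : 0 < (x - a) ^ 2 := pow_pos (sub_pos.2 hx.1) 2
      nlinarith [mul_lt_mul_of_pos_left hy ht])
    (sub_pos.2 (hsub (right_mem_Ioc.2 hx₀)).1.1) (sub_neg.2 (hsub (right_mem_Ioc.2 hx₀)).1.2)
  have hsmall : Tendsto (fun x => 4 * (x - a) ^ (1 / 2 : ℝ)) (𝓝[>] a) (𝓝 0) := by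
    have : ContinuousAt (fun x => 4 * (x - a) ^ (1 / 2 : ℝ)) a := by fun_prop (disch := norm_num)
    simpa using this.tendsto.mono_left nhdsWithin_le_nhds
  have hmem₀ : ∀ᶠ x in 𝓝[>] a, x ∈ Ioc a x₀ := Ioc_mem_nhdsGT hx₀
  obtain ⟨x, hx, hxα⟩ := (hmem₀.and (hsmall.eventually_lt_const hα)).exists
  obtain ⟨-, ⟨hy₁, -⟩, ⟨-, hy₂⟩, -⟩ := hsub hx
  have ht : 0 < x - a := sub_pos.2 hx.1
  have hsplit : (x - a) ^ (5 / 2 : ℝ) = (x - a) ^ (1 / 2 : ℝ) * (x - a) ^ 2 := by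
    rw [← Real.rpow_natCast, ← Real.rpow_add ht]
    norm_num
  have hw : (x - a) ^ 2 * (y₂ x - y₁ x) ≤ 4 := by linarith
  have := (hαw x hx).trans_eq (by rw [hsplit, mul_assoc])
  linarith [mul_le_mul_of_nonneg_left hw (Real.rpow_nonneg ht.le (1 / 2 : ℝ))]

end PainleveI

theorem painleveI_same_level_comparison_general
    (a₁ a₂ x₁ x₂ y_l : ℝ) (hx : x₁ < x₂) (hx₂ : x₂ ≤ 0)
    (ha₁ : a₁ < x₁)
    (y₁ y₁' y₂ y₂' : ℝ → ℝ)
    (h₁ : ∀ x ∈ Set.Ioc a₁ x₁,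
      HasDerivAt y₁ (y₁' x) x ∧ HasDerivAt y₁' (6 * (y₁ x) ^ 2 - x) x)
    (h₂ : ∀ x ∈ Set.Ioc a₂ x₂,
      HasDerivAt y₂ (y₂' x) x ∧ HasDerivAt y₂' (6 * (y₂ x) ^ 2 - x) x)
    (hblow₁ : Tendsto y₁ (𝓝[>] a₁) atTop)
    (hblow₂ : Tendsto y₂ (𝓝[>] a₂) atTop)
    (hmin₁ : y₁ x₁ = y_l) (hmin₂ : y₂ x₂ = y_l)
    (hcrit₁ : y₁' x₁ = 0) (hcrit₂ : y₂' x₂ = 0) :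
    a₁ < a₂ ∧
      ∀ x ∈ Set.Ioo a₂ x₁, y₁ x < y₂ x ∧ y₂' x < y₁' x ∧ y₁' x < 0 := by
  have h₁ : PainleveI.SolvesOn y₁ y₁' (Ioc a₁ x₁) := h₁
  have h₂ : PainleveI.SolvesOn y₂ y₂' (Ioc a₂ x₂) := h₂
  have hx₁ : x₁ ≤ 0 := hx.le.trans hx₂
  rcases le_or_gt x₁ a₂ with hxa | hax
  · exact ⟨ha₁.trans_le hxa, fun x hx' => absurd (hx'.1.trans hx'.2) hxa.not_gt⟩
  have hcomp : ∀ A, a₁ ≤ A → a₂ ≤ A → A < x₁ → ∀ x ∈ Ioc A x₁, y₁ x < y₂ x ∧ y₂' x < y₁' x :=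
    fun A hA₁ hA₂ hA => PainleveI.same_level_comparison (h₁.mono (Ioc_subset_Ioc_left hA₁))
      (h₂.mono (Ioc_subset_Ioc_left hA₂)) hA hx hx₂ (hmin₁.trans hmin₂.symm) hcrit₁ hcrit₂
  have ha : a₁ < a₂ := by
    rcases lt_trichotomy a₁ a₂ with hlt | rfl | hgt
    · exact hlt
    · exact absurd (eventually_of_mem (Ioc_mem_nhdsGT ha₁) (hcomp a₁ le_rfl le_rfl ha₁))
        (PainleveI.not_eventually_lt_of_common_pole h₁ h₂ ha₁ (ha₁.trans hx) hx₁ hx₂ hcrit₁ hcrit₂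
          hblow₁ hblow₂)
    · have hcont : ContinuousAt y₂ a₁ := (h₂ a₁ ⟨hgt, (ha₁.trans hx).le⟩).1.continuousAt
      refine absurd (tendsto_atTop_mono' _ ?_ hblow₁)
        (not_tendsto_atTop_of_tendsto_nhds (hcont.tendsto.mono_left nhdsWithin_le_nhds))
      filter_upwards [Ioc_mem_nhdsGT ha₁] with x hx' using (hcomp a₁ le_rfl hgt.le ha₁ x hx').1.le
  refine ⟨ha, fun x hx' => ?_⟩
  obtain ⟨hy, hy'⟩ := hcomp a₂ ha.le le_rfl hax x (Ioo_subset_Ioc_self hx')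
  exact ⟨hy, hy', h₁.deriv_neg hx₁ hcrit₁ x ⟨ha.trans hx'.1, hx'.2⟩⟩

/-- Two solutions of `y'' = 6y² - x` with the same minimum value `y_l`, attained
at `x₁ < x₂ ≤ 0` respectively, satisfy: the left blow-up points obey `a₂ > a₁`,
and `y₁ < y₂`, `y₂' < y₁' < 0` on `(a₂, x₁)`. -/
theorem painleveI_same_level_comparison
    (a₁ a₂ x₁ x₂ y_l : ℝ) (hx : x₁ < x₂) (hx₂ : x₂ ≤ 0)
    (ha₁ : a₁ < x₁) (ha₂ : a₂ < x₂)
    (y₁ y₁' y₂ y₂' : ℝ → ℝ)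
    (h₁ : ∀ x ∈ Set.Ioc a₁ x₁,
      HasDerivAt y₁ (y₁' x) x ∧ HasDerivAt y₁' (6 * (y₁ x) ^ 2 - x) x)
    (h₂ : ∀ x ∈ Set.Ioc a₂ x₂,
      HasDerivAt y₂ (y₂' x) x ∧ HasDerivAt y₂' (6 * (y₂ x) ^ 2 - x) x)
    (hblow₁ : Tendsto y₁ (𝓝[>] a₁) atTop)
    (hblow₂ : Tendsto y₂ (𝓝[>] a₂) atTop)
    (hmin₁ : y₁ x₁ = y_l) (hmin₂ : y₂ x₂ = y_l)
    (hcrit₁ : y₁' x₁ = 0) (hcrit₂ : y₂' x₂ = 0) :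
    a₁ < a₂ ∧
      ∀ x ∈ Set.Ioo a₂ x₁, y₁ x < y₂ x ∧ y₂' x < y₁' x ∧ y₁' x < 0 :=
  painleveI_same_level_comparison_general a₁ a₂ x₁ x₂ y_l hx hx₂ ha₁ y₁ y₁' y₂ y₂' h₁ h₂ hblow₁
    hblow₂ hmin₁ hmin₂ hcrit₁ hcrit₂
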